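/- arXiv:0709.0313 — 2 statements merged into one kernel-verified Lean document; each statement's English description precedes it below -/
import Mathlib

section
/- For almost every x ∈ (0,1) with continued fraction expansion x = [a_1, a_2, …], one has limsup_{n→∞} (log a_n)/(log n) = 1 (Corollary 5). -/
/-!
The partial quotients `a₁, …, aₙ` cut the irrationals of `(0,1)` into cylinders; the cylinder of
`[c₁, …, cₙ]` is the image of all irrationals of `(0,1)` under the Möbius map
`t ↦ (pₙ₋₁ t + pₙ) / (qₙ₋₁ t + qₙ)`, so it has length `1 / (qₙ (qₙ + qₙ₋₁))`. Inside it, the event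
`aₙ₊₁ ≥ k` is the image of `(0, 1/k)`, whose relative length `(qₙ + qₙ₋₁) / (k qₙ + qₙ₋₁)` lies
between `1/k` and `2/k`, since `qₙ₋₁ ≤ qₙ`.

The upper bound gives `λ(aₙ > n^p) ≤ 2 n^(-p)`, which is summable for `p > 1`, so by Borel–Cantelli
almost surely `aₙ ≤ n^p` eventually. The lower bound, applied cylinder by cylinder, gives
`λ(aₙ < n for N ≤ n ≤ M) ≤ ∏_{m=N+1}^{M} (1 - 1/m) = N/M`, so almost surely `aₙ ≥ n` infinitely
often. Hence `limsup log aₙ / log n = 1`.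
-/

open Filter MeasureTheory Real Topology

/-- The Gauss map `x ↦ {1/x}`. -/
noncomputable def gaussMap (x : ℝ) : ℝ := Int.fract x⁻¹

/-- `partQuot x n` is the `n`-th partial quotient `aₙ` of the regular continued fraction
expansion `x = [a₁, a₂, …]` of `x ∈ (0,1)` (meaningful for `n ≥ 1`). -/
noncomputable def partQuot (x : ℝ) (n : ℕ) : ℕ := (⌊(gaussMap^[n - 1] x)⁻¹⌋).toNat

/-- `cfQ x n` is the denominator `qₙ` of the `n`-th continued fraction convergent
`pₙ/qₙ = [a₁, …, aₙ]` of `x`, given by `q₀ = 1`, `q₁ = a₁`, `qₙ = aₙ qₙ₋₁ + qₙ₋₂`. -/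
noncomputable def cfQ (x : ℝ) : ℕ → ℤ
  | 0 => 1
  | 1 => partQuot x 1
  | (n + 2) => partQuot x (n + 2) * cfQ x (n + 1) + cfQ x n

/-- `cfP x n` is the numerator `pₙ` of the `n`-th continued fraction convergent of `x`,
given by `p₀ = 0`, `p₁ = 1`, `pₙ = aₙ pₙ₋₁ + pₙ₋₂`. -/
noncomputable def cfP (x : ℝ) : ℕ → ℤ
  | 0 => 0
  | 1 => 1
  | (n + 2) => partQuot x (n + 2) * cfP x (n + 1) + cfP x n

open Set
open scoped ENNReal

def unitIrrationals : Set ℝ := Ioo 0 1 ∩ {x | Irrational x}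

local notation "𝕀" => unitIrrationals

lemma measurableSet_unitIrrationals : MeasurableSet 𝕀 := by
  have : {x : ℝ | Irrational x} = (range ((↑) : ℚ → ℝ))ᶜ := by ext; simp [Irrational]
  rw [unitIrrationals, this]
  exact measurableSet_Ioo.inter (countable_range _).measurableSet.compl

lemma ae_restrict_Ioo_mem_unitIrrationals : ∀ᵐ x ∂volume.restrict (Ioo (0 : ℝ) 1), x ∈ 𝕀 := by
  have hirr : ∀ᵐ x : ℝ, Irrational x :=
    measure_eq_zero_iff_ae_notMem.1 ((countable_range ((↑) : ℚ → ℝ)).measure_zero _)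
  filter_upwards [ae_restrict_mem measurableSet_Ioo, ae_restrict_of_ae hirr] with x h1 h2
  exact ⟨h1, h2⟩

lemma Irrational.gaussMap {x : ℝ} (hx : Irrational x) : Irrational (gaussMap x) :=
  hx.inv.sub_intCast _

lemma gaussMap_nonneg (x : ℝ) : 0 ≤ gaussMap x := Int.fract_nonneg _

lemma gaussMap_mem {x : ℝ} (hx : x ∈ 𝕀) : gaussMap x ∈ 𝕀 := by
  have hirr := hx.2.gaussMap
  have hne : gaussMap x ≠ 0 := by simpa using hirr.ne_int 0
  exact ⟨⟨(gaussMap_nonneg x).lt_of_ne' hne, Int.fract_lt_one _⟩, hirr⟩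

lemma iterate_gaussMap_mem {x : ℝ} (hx : x ∈ 𝕀) (n : ℕ) : gaussMap^[n] x ∈ 𝕀 := by
  induction n with
  | zero => exact hx
  | succ n ih => rw [Function.iterate_succ_apply']; exact gaussMap_mem ih

lemma partQuot_succ (x : ℝ) (n : ℕ) : partQuot x (n + 1) = partQuot (gaussMap^[n] x) 1 := by
  simp [partQuot]

lemma partQuot_one (x : ℝ) : partQuot x 1 = ⌊x⁻¹⌋.toNat := rfl

lemma le_partQuot_one_iff {x : ℝ} (hx : 0 ≤ x) {k : ℕ} : k ≤ partQuot x 1 ↔ (k : ℝ) ≤ x⁻¹ := by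
  rw [partQuot_one, Int.le_toNat (Int.floor_nonneg.2 (inv_nonneg.2 hx)), Int.le_floor,
    Int.cast_natCast]

lemma inv_eq_partQuot_one_add_gaussMap {x : ℝ} (hx : 0 ≤ x) :
    x⁻¹ = partQuot x 1 + gaussMap x := by
  have hfloor : ((⌊x⁻¹⌋.toNat : ℕ) : ℝ) = ⌊x⁻¹⌋ := by
    exact_mod_cast Int.toNat_of_nonneg (Int.floor_nonneg.2 (inv_nonneg.2 hx))
  rw [partQuot_one, gaussMap, hfloor, Int.floor_add_fract]

lemma gaussMap_inv_natCast_add (c : ℕ) {y : ℝ} (hy : y ∈ Ico 0 1) : gaussMap (c + y)⁻¹ = y := by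
  rw [gaussMap, inv_inv, ← Int.cast_natCast, Int.fract_intCast_add, Int.fract_eq_self.2 hy]

lemma partQuot_one_inv_natCast_add (c : ℕ) {y : ℝ} (hy : y ∈ Ico 0 1) :
    partQuot (c + y)⁻¹ 1 = c := by
  rw [partQuot_one, inv_inv, ← Int.cast_natCast, Int.floor_intCast_add, Int.floor_eq_zero_iff.2 hy]
  simp

lemma one_le_partQuot {x : ℝ} (hx : x ∈ 𝕀) {n : ℕ} (hn : 1 ≤ n) : 1 ≤ partQuot x n := by
  obtain ⟨m, rfl⟩ := Nat.exists_eq_add_of_le' hn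
  have hy := iterate_gaussMap_mem hx m
  rw [partQuot_succ, le_partQuot_one_iff hy.1.1.le, Nat.cast_one]
  exact (one_lt_inv₀ hy.1.1).2 hy.1.2 |>.le

lemma measurable_gaussMap : Measurable gaussMap :=
  measurable_fract.comp measurable_inv

lemma measurable_partQuot (n : ℕ) : Measurable (partQuot · n) :=
  measurable_from_top.comp ((measurable_inv.comp (measurable_gaussMap.iterate _)).floor)

noncomputable def partQuots (x : ℝ) (n : ℕ) : List ℕ :=
  (List.range n).map fun i => partQuot x (i + 1)

@[simp] lemma length_partQuots (x : ℝ) (n : ℕ) : (partQuots x n).length = n := by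
  simp [partQuots]

lemma partQuots_succ (x : ℝ) (n : ℕ) :
    partQuots x (n + 1) = partQuot x 1 :: partQuots (gaussMap x) n := by
  simp [partQuots, List.range_succ_eq_map, partQuot_succ, Function.iterate_succ_apply]

lemma pos_of_mem_partQuots {x : ℝ} (hx : x ∈ 𝕀) {n : ℕ} : ∀ c ∈ partQuots x n, 0 < c := by
  simp only [partQuots, List.mem_map, List.mem_range, forall_exists_index, and_imp]
  rintro _ i - rfl
  exact one_le_partQuot hx le_add_self

lemma partQuot_eq_of_partQuots_eq {x y : ℝ} {m n : ℕ} (h : partQuots x m = partQuots y m)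
    (hn : 1 ≤ n) (hnm : n ≤ m) : partQuot x n = partQuot y n := by
  obtain ⟨i, rfl⟩ := Nat.exists_eq_add_of_le' hn
  exact List.map_inj_left.1 h i (List.mem_range.2 hnm)

lemma measurableSet_partQuots_eq (n : ℕ) (l : List ℕ) : MeasurableSet {x | partQuots x n = l} := by
  induction n generalizing l with
  | zero => cases l <;> simp [partQuots]
  | succ n ih =>
    cases l with
    | nil => simp [partQuots_succ]
    | cons c l =>
      simp only [partQuots_succ, List.cons.injEq, ofPred_and]
      exact (measurable_partQuot 1 (measurableSet_singleton c)).inter (measurable_gaussMap (ih l))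

/-- `cfMap [c₁, …, cₙ] t = [c₁, …, cₙ₋₁, cₙ + t]` is the inverse branch of `gaussMap^[n]` on the
cylinder of `[c₁, …, cₙ]`. -/
noncomputable def cfMap : List ℕ → ℝ → ℝ
  | [], t => t
  | c :: l, t => (c + cfMap l t)⁻¹

/-- `!![pₙ₋₁, pₙ; qₙ₋₁, qₙ]`, where `pₖ / qₖ` are the convergents of `[c₁, …, cₙ]`. -/
noncomputable def cfMatrix (l : List ℕ) : Matrix (Fin 2) (Fin 2) ℝ :=
  (l.map fun c => !![0, 1; 1, (c : ℝ)]).prod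

section cfMatrix

variable {l : List ℕ}

lemma cfMatrix_cons (c : ℕ) (l : List ℕ) : cfMatrix (c :: l) = !![0, 1; 1, (c : ℝ)] * cfMatrix l :=
  rfl

@[simp] lemma cfMatrix_cons_zero (c : ℕ) (l : List ℕ) (j : Fin 2) :
    cfMatrix (c :: l) 0 j = cfMatrix l 1 j := by
  simp [cfMatrix_cons, Matrix.mul_apply]

@[simp] lemma cfMatrix_cons_one (c : ℕ) (l : List ℕ) (j : Fin 2) :
    cfMatrix (c :: l) 1 j = cfMatrix l 0 j + c * cfMatrix l 1 j := by
  simp [cfMatrix_cons, Matrix.mul_apply]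

lemma det_cfMatrix (l : List ℕ) : (cfMatrix l).det = (-1) ^ l.length := by
  induction l with
  | nil => simp [cfMatrix]
  | cons c l ih =>
    rw [cfMatrix_cons, Matrix.det_mul, ih, Matrix.det_fin_two_of, List.length_cons, pow_succ]
    ring

lemma cfMatrix_nonneg (l : List ℕ) (i j : Fin 2) : 0 ≤ cfMatrix l i j := by
  induction l generalizing i with
  | nil => fin_cases i <;> fin_cases j <;> simp [cfMatrix]
  | cons c l ih =>
    match i with
    | 0 => simpa using ih 1
    | 1 => simpa using add_nonneg (ih 0) (mul_nonneg c.cast_nonneg (ih 1))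

lemma one_le_cfMatrix_one_one (hl : ∀ c ∈ l, 0 < c) : 1 ≤ cfMatrix l 1 1 := by
  induction l with
  | nil => simp [cfMatrix]
  | cons c l ih =>
    obtain ⟨hc, hl⟩ := List.forall_mem_cons.1 hl
    rw [cfMatrix_cons_one]
    nlinarith [cfMatrix_nonneg l 0 1, ih hl, Nat.one_le_cast (α := ℝ) |>.2 hc]

lemma cfMatrix_one_zero_le_one_one : ∀ {l : List ℕ}, (∀ c ∈ l, 0 < c) →
    cfMatrix l 1 0 ≤ cfMatrix l 1 1
  | [], _ => by simp [cfMatrix]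
  | [c], hl => by simpa [cfMatrix] using Nat.one_le_cast (α := ℝ) |>.2 (hl c List.mem_cons_self)
  | c :: d :: l, hl => by
    obtain ⟨-, hl⟩ := List.forall_mem_cons.1 hl
    have h₁ := cfMatrix_one_zero_le_one_one hl
    have h₂ := cfMatrix_one_zero_le_one_one (List.forall_mem_cons.1 hl).2
    rw [cfMatrix_cons_one c _ 0, cfMatrix_cons_one c _ 1, cfMatrix_cons_zero d l 0,
      cfMatrix_cons_zero d l 1]
    nlinarith [c.cast_nonneg (α := ℝ)]

lemma cfMatrix_denom_pos (hl : ∀ c ∈ l, 0 < c) {t : ℝ} (ht : 0 ≤ t) :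
    0 < cfMatrix l 1 0 * t + cfMatrix l 1 1 := by
  nlinarith [cfMatrix_nonneg l 1 0, one_le_cfMatrix_one_one hl]

lemma cfMap_nonneg (l : List ℕ) {t : ℝ} (ht : 0 ≤ t) : 0 ≤ cfMap l t := by
  induction l with
  | nil => exact ht
  | cons c l ih => exact inv_nonneg.2 (add_nonneg c.cast_nonneg ih)

lemma cfMap_eq (hl : ∀ c ∈ l, 0 < c) {t : ℝ} (ht : 0 ≤ t) :
    cfMap l t = (cfMatrix l 0 0 * t + cfMatrix l 0 1) / (cfMatrix l 1 0 * t + cfMatrix l 1 1) := by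
  induction l with
  | nil => simp [cfMap, cfMatrix]
  | cons c l ih =>
    obtain ⟨-, hl⟩ := List.forall_mem_cons.1 hl
    rw [cfMap, ih hl, add_div' _ _ _ (cfMatrix_denom_pos hl ht).ne', inv_div]
    simp only [cfMatrix_cons_zero, cfMatrix_cons_one]
    ring

lemma cfMap_sub (hl : ∀ c ∈ l, 0 < c) {u v : ℝ} (hu : 0 ≤ u) (hv : 0 ≤ v) :
    cfMap l v - cfMap l u = (-1) ^ l.length * (v - u) /
      ((cfMatrix l 1 0 * u + cfMatrix l 1 1) * (cfMatrix l 1 0 * v + cfMatrix l 1 1)) := by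
  have hdet := det_cfMatrix l
  rw [Matrix.det_fin_two] at hdet
  have hu' := cfMatrix_denom_pos hl hu
  have hv' := cfMatrix_denom_pos hl hv
  rw [cfMap_eq hl hu, cfMap_eq hl hv, div_sub_div _ _ hv'.ne' hu'.ne',
    div_eq_div_iff (by positivity) (by positivity), ← hdet]
  ring

lemma strictMonoOn_or_strictAntiOn_cfMap (hl : ∀ c ∈ l, 0 < c) :
    StrictMonoOn (cfMap l) (Ici 0) ∨ StrictAntiOn (cfMap l) (Ici 0) := by
  have hD {u v : ℝ} (hu : 0 ≤ u) (hv : 0 ≤ v) :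
      0 < (cfMatrix l 1 0 * u + cfMatrix l 1 1) * (cfMatrix l 1 0 * v + cfMatrix l 1 1) :=
    mul_pos (cfMatrix_denom_pos hl hu) (cfMatrix_denom_pos hl hv)
  rcases neg_one_pow_eq_or ℝ l.length with h | h
  · refine Or.inl fun u hu v hv huv => sub_pos.1 ?_
    rw [cfMap_sub hl hu hv, h, one_mul]
    exact div_pos (sub_pos.2 huv) (hD hu hv)
  · refine Or.inr fun u hu v hv huv => sub_neg.1 ?_
    rw [cfMap_sub hl hu hv, h, neg_one_mul]
    exact div_neg_of_neg_of_pos (neg_neg_of_pos (sub_pos.2 huv)) (hD hu hv)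

lemma continuousOn_cfMap (hl : ∀ c ∈ l, 0 < c) : ContinuousOn (cfMap l) (Ici 0) := by
  induction l with
  | nil => exact continuousOn_id
  | cons c l ih =>
    obtain ⟨hc, hl⟩ := List.forall_mem_cons.1 hl
    refine (continuousOn_const.add (ih hl)).inv₀ fun t ht => ?_
    exact (add_pos_of_pos_of_nonneg (Nat.cast_pos.2 hc) (cfMap_nonneg l ht)).ne'

end cfMatrix

lemma measure_image_inter_irrational {μ : Measure ℝ} [NullSingletonClass μ] (f : ℝ → ℝ)
    (s : Set ℝ) :
    μ (f '' (s ∩ {x | Irrational x})) = μ (f '' s) := by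
  refine (measure_mono (image_mono inter_subset_left)).antisymm ?_
  have hsplit : f '' s ⊆ f '' (s ∩ {x | Irrational x}) ∪ f '' range ((↑) : ℚ → ℝ) := by
    rintro _ ⟨x, hx, rfl⟩
    by_cases hirr : Irrational x
    · exact Or.inl ⟨x, ⟨hx, hirr⟩, rfl⟩
    · exact Or.inr ⟨x, not_not.1 hirr, rfl⟩
  calc μ (f '' s) ≤ μ (f '' (s ∩ {x | Irrational x})) + μ (f '' range ((↑) : ℚ → ℝ)) :=
        (measure_mono hsplit).trans (measure_union_le _ _)
    _ = μ (f '' (s ∩ {x | Irrational x})) := by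
        rw [((countable_range _).image f).measure_zero, add_zero]

lemma volume_image_Ioo_of_strictMonoOn_or_strictAntiOn {f : ℝ → ℝ} {a b : ℝ} (hab : a ≤ b)
    (hf : ContinuousOn f (Icc a b))
    (hmono : StrictMonoOn f (Icc a b) ∨ StrictAntiOn f (Icc a b)) :
    volume (f '' Ioo a b) = ENNReal.ofReal |f b - f a| := by
  have ha : a ∈ Icc a b := left_mem_Icc.2 hab
  have hb : b ∈ Icc a b := right_mem_Icc.2 hab
  rcases hmono with h | h
  · rw [hf.image_Ioo_of_strictMonoOn hab h, Real.volume_Ioo,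
      abs_of_nonneg (sub_nonneg.2 (h.monotoneOn ha hb hab))]
  · rw [hf.image_Ioo_of_strictAntiOn hab h, Real.volume_Ioo, abs_sub_comm,
      abs_of_nonneg (sub_nonneg.2 (h.antitoneOn ha hb hab))]

lemma volume_image_cfMap {l : List ℕ} (hl : ∀ c ∈ l, 0 < c) {v : ℝ} (hv : 0 < v) :
    volume (cfMap l '' (Ioo 0 v ∩ {x | Irrational x})) =
      ENNReal.ofReal (v / (cfMatrix l 1 1 * (cfMatrix l 1 0 * v + cfMatrix l 1 1))) := by
  have hsub : Icc 0 v ⊆ Ici 0 := Icc_subset_Ici_self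
  rw [measure_image_inter_irrational, volume_image_Ioo_of_strictMonoOn_or_strictAntiOn hv.le
    ((continuousOn_cfMap hl).mono hsub)
    ((strictMonoOn_or_strictAntiOn_cfMap hl).imp (·.mono hsub) (·.mono hsub)),
    cfMap_sub hl le_rfl hv.le, abs_div, abs_mul, abs_pow, abs_neg, abs_one, one_pow, one_mul,
    sub_zero, abs_of_pos hv, abs_of_pos (mul_pos (cfMatrix_denom_pos hl le_rfl)
      (cfMatrix_denom_pos hl hv.le)), mul_zero, zero_add]

def cylinder (l : List ℕ) : Set ℝ := 𝕀 ∩ {x | partQuots x l.length = l}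

lemma measurableSet_cylinder (l : List ℕ) : MeasurableSet (cylinder l) :=
  measurableSet_unitIrrationals.inter (measurableSet_partQuots_eq _ _)

lemma mem_cylinder_partQuots {x : ℝ} (hx : x ∈ 𝕀) (n : ℕ) : x ∈ cylinder (partQuots x n) :=
  ⟨hx, congrArg (partQuots x) (length_partQuots x n)⟩

lemma pairwiseDisjoint_cylinder (n : ℕ) :
    {l : List ℕ | l.length = n}.PairwiseDisjoint cylinder := by
  intro l (hl : l.length = n) l' (hl' : l'.length = n) hne
  refine disjoint_left.2 fun x hx hx' => hne ?_
  rw [← hx.2, ← hx'.2, hl, hl']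

lemma cfMap_partQuots_iterate {x : ℝ} (hx : 0 ≤ x) (n : ℕ) :
    cfMap (partQuots x n) (gaussMap^[n] x) = x := by
  induction n generalizing x with
  | zero => rfl
  | succ n ih =>
    rw [partQuots_succ, Function.iterate_succ_apply, cfMap, ih (gaussMap_nonneg x),
      ← inv_eq_partQuot_one_add_gaussMap hx, inv_inv]

section cfMap

variable {l : List ℕ} (hl : ∀ c ∈ l, 0 < c) {y : ℝ} (hy : y ∈ 𝕀)
include hl hy

lemma cfMap_mem : cfMap l y ∈ 𝕀 := by
  induction l with
  | nil => exact hy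
  | cons c l ih =>
    obtain ⟨hc, hl⟩ := List.forall_mem_cons.1 hl
    have hz := ih hl
    have hcz : 1 < c + cfMap l y := by linarith [hz.1.1, Nat.one_le_cast (α := ℝ) |>.2 hc]
    exact ⟨⟨inv_pos.2 (by linarith), inv_lt_one_of_one_lt₀ hcz⟩, (hz.2.natCast_add c).inv⟩

lemma iterate_gaussMap_cfMap : gaussMap^[l.length] (cfMap l y) = y := by
  induction l with
  | nil => rfl
  | cons c l ih =>
    obtain ⟨-, hl⟩ := List.forall_mem_cons.1 hl
    rw [List.length_cons, Function.iterate_succ_apply, cfMap,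
      gaussMap_inv_natCast_add c (Ioo_subset_Ico_self (cfMap_mem hl hy).1), ih hl]

lemma partQuots_cfMap : partQuots (cfMap l y) l.length = l := by
  induction l with
  | nil => rfl
  | cons c l ih =>
    obtain ⟨-, hl⟩ := List.forall_mem_cons.1 hl
    have hz := Ioo_subset_Ico_self (cfMap_mem hl hy).1
    rw [List.length_cons, partQuots_succ, cfMap, partQuot_one_inv_natCast_add c hz,
      gaussMap_inv_natCast_add c hz, ih hl]

end cfMap

lemma image_cfMap {l : List ℕ} (hl : ∀ c ∈ l, 0 < c) {E : Set ℝ} (hE : E ⊆ 𝕀) :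
    cfMap l '' E = cylinder l ∩ gaussMap^[l.length] ⁻¹' E := by
  ext x
  constructor
  · rintro ⟨y, hy, rfl⟩
    refine ⟨⟨cfMap_mem hl (hE hy), partQuots_cfMap hl (hE hy)⟩, ?_⟩
    rwa [mem_preimage, iterate_gaussMap_cfMap hl (hE hy)]
  · rintro ⟨⟨hx, hxl⟩, hxE⟩
    refine ⟨_, hxE, ?_⟩
    nth_rw 1 [← hxl]
    exact cfMap_partQuots_iterate hx.1.1.le _

lemma unitIrrationals_inter_le_partQuot_one {k : ℕ} (hk : 0 < k) :
    𝕀 ∩ {y | k ≤ partQuot y 1} = Ioo 0 (k : ℝ)⁻¹ ∩ {y | Irrational y} := by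
  have hk' : (0 : ℝ) < k := by exact_mod_cast hk
  ext y
  simp only [unitIrrationals, mem_inter_iff, mem_Ioo, mem_ofPred_eq]
  constructor
  · rintro ⟨⟨⟨hy0, -⟩, hirr⟩, hky⟩
    rw [le_partQuot_one_iff hy0.le, le_inv_comm₀ hk' hy0] at hky
    refine ⟨⟨hy0, hky.lt_of_ne fun h => hirr.inv.ne_nat k ?_⟩, hirr⟩
    rw [h, inv_inv]
  · rintro ⟨⟨hy0, hyk⟩, hirr⟩
    have hk1 : (k : ℝ)⁻¹ ≤ 1 := inv_le_one_of_one_le₀ (by exact_mod_cast hk)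
    rw [le_partQuot_one_iff hy0.le, le_inv_comm₀ hk' hy0]
    exact ⟨⟨⟨hy0, hyk.trans_le hk1⟩, hirr⟩, hyk.le⟩

section cylinder

variable {l : List ℕ} (hl : ∀ c ∈ l, 0 < c)
include hl

lemma cylinder_eq_image_cfMap : cylinder l = cfMap l '' 𝕀 := by
  rw [image_cfMap hl subset_rfl]
  exact (inter_eq_left.2 fun x hx => iterate_gaussMap_mem hx.1 _).symm

lemma cylinder_inter_le_partQuot_eq_image_cfMap {k : ℕ} (hk : 0 < k) :
    cylinder l ∩ {x | k ≤ partQuot x (l.length + 1)} =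
      cfMap l '' (Ioo 0 (k : ℝ)⁻¹ ∩ {y | Irrational y}) := by
  rw [← unitIrrationals_inter_le_partQuot_one hk, image_cfMap hl inter_subset_left]
  ext x
  simp only [mem_inter_iff, mem_preimage, mem_ofPred_eq]
  rw [partQuot_succ]
  exact and_congr_right fun hx => (and_iff_right (iterate_gaussMap_mem hx.1 _)).symm

lemma volume_cylinder :
    volume (cylinder l) =
      ENNReal.ofReal (1 / (cfMatrix l 1 1 * (cfMatrix l 1 0 + cfMatrix l 1 1))) := by
  rw [cylinder_eq_image_cfMap hl, unitIrrationals, volume_image_cfMap hl one_pos, mul_one]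

lemma volume_cylinder_inter_le_partQuot {k : ℕ} (hk : 0 < k) :
    volume (cylinder l ∩ {x | k ≤ partQuot x (l.length + 1)}) =
      ENNReal.ofReal (1 / (cfMatrix l 1 1 * (cfMatrix l 1 0 + k * cfMatrix l 1 1))) := by
  have hk' : (0 : ℝ) < k := by exact_mod_cast hk
  rw [cylinder_inter_le_partQuot_eq_image_cfMap hl hk, volume_image_cfMap hl (inv_pos.2 hk')]
  have := cfMatrix_denom_pos hl (inv_pos.2 hk').le
  congr 1
  field_simp

lemma volume_cylinder_inter_le_partQuot_le {k : ℕ} (hk : 0 < k) :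
    volume (cylinder l ∩ {x | k ≤ partQuot x (l.length + 1)}) ≤
      ENNReal.ofReal (2 / k) * volume (cylinder l) := by
  have hk' : (1 : ℝ) ≤ k := Nat.one_le_cast.2 hk
  have hq := one_le_cfMatrix_one_one hl
  have hq' := cfMatrix_nonneg l 1 0
  have hq'q := cfMatrix_one_zero_le_one_one hl
  rw [volume_cylinder_inter_le_partQuot hl hk, volume_cylinder hl,
    ← ENNReal.ofReal_mul (by positivity)]
  refine ENNReal.ofReal_le_ofReal ?_
  rw [div_mul_div_comm, div_le_div_iff₀ (by positivity) (by positivity)]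
  have hq0 : (0 : ℝ) ≤ cfMatrix l 1 1 := by linarith
  nlinarith [mul_nonneg hq0 (mul_nonneg (by linarith : (0 : ℝ) ≤ k) (sub_nonneg.2 hq'q)),
    mul_nonneg hq0 hq']

lemma volume_cylinder_inter_partQuot_lt_le {k : ℕ} (hk : 0 < k) :
    volume (cylinder l ∩ {x | partQuot x (l.length + 1) < k}) ≤
      ENNReal.ofReal (1 - 1 / k) * volume (cylinder l) := by
  have hk' : (1 : ℝ) ≤ k := Nat.one_le_cast.2 hk
  have hq := one_le_cfMatrix_one_one hl
  have hq' := cfMatrix_nonneg l 1 0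
  have hF : MeasurableSet {x | k ≤ partQuot x (l.length + 1)} :=
    measurable_partQuot _ measurableSet_Ici
  have hcompl : {x | partQuot x (l.length + 1) < k} = {x | k ≤ partQuot x (l.length + 1)}ᶜ := by
    ext; simp
  have hsplit := measure_inter_add_sdiff (μ := volume) (cylinder l) hF
  rw [volume_cylinder_inter_le_partQuot hl hk] at hsplit
  rw [hcompl, ← sdiff_eq, ENNReal.eq_sub_of_add_eq ENNReal.ofReal_ne_top
    ((add_comm _ _).trans hsplit), volume_cylinder hl, ← ENNReal.ofReal_sub _ (by positivity),
    ← ENNReal.ofReal_mul (sub_nonneg.2 (div_le_one_of_le₀ hk' (by positivity)))]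
  refine ENNReal.ofReal_le_ofReal ?_
  rw [sub_mul, one_mul, sub_le_sub_iff_left, div_mul_div_comm,
    div_le_div_iff₀ (by positivity) (by positivity)]
  have hq0 : (0 : ℝ) ≤ cfMatrix l 1 1 := by linarith
  nlinarith [mul_nonneg (sub_nonneg.2 hk') (mul_nonneg hq0 hq')]

end cylinder

lemma volume_unitIrrationals_le_one : volume 𝕀 ≤ 1 :=
  (measure_mono inter_subset_left).trans (by rw [Real.volume_Ioo, sub_zero, ENNReal.ofReal_one])

/-- `hE` says that `E` is a union of cylinders of rank `n`. -/
lemma volume_inter_le_of_forall_cylinder {E F : Set ℝ} {n : ℕ} {c : ℝ≥0∞} (hE𝕀 : E ⊆ 𝕀)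
    (hE : ∀ x ∈ E, cylinder (partQuots x n) ⊆ E)
    (hF : ∀ l : List ℕ, (∀ a ∈ l, 0 < a) → l.length = n →
      volume (cylinder l ∩ F) ≤ c * volume (cylinder l)) :
    volume (E ∩ F) ≤ c * volume E := by
  set L := (partQuots · n) '' E
  have hL : L ⊆ {l | l.length = n} := by
    rintro _ ⟨x, -, rfl⟩
    exact length_partQuots x n
  have hEL : E = ⋃ l ∈ L, cylinder l := by
    refine Subset.antisymm (fun x hx => mem_biUnion (mem_image_of_mem _ hx)
      (mem_cylinder_partQuots (hE𝕀 hx) n)) ?_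
    simpa only [L, biUnion_image, iUnion₂_subset_iff] using hE
  calc volume (E ∩ F) = volume (⋃ l ∈ L, cylinder l ∩ F) := by rw [hEL, iUnion₂_inter]
    _ ≤ ∑' l : L, volume (cylinder l ∩ F) := measure_biUnion_le _ L.to_countable _
    _ ≤ ∑' l : L, c * volume (cylinder l) := by
      refine ENNReal.tsum_le_tsum fun ⟨_, x, hx, hxl⟩ => ?_
      subst hxl
      exact hF _ (pos_of_mem_partQuots (hE𝕀 hx)) (length_partQuots x n)
    _ = c * volume E := by
      rw [ENNReal.tsum_mul_left, hEL, measure_biUnion L.to_countable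
        ((pairwiseDisjoint_cylinder n).subset hL) fun l _ => measurableSet_cylinder l]

lemma volume_le_partQuot_le (n : ℕ) {k : ℕ} (hk : 0 < k) :
    volume (𝕀 ∩ {x | k ≤ partQuot x (n + 1)}) ≤ ENNReal.ofReal (2 / k) :=
  calc _ ≤ ENNReal.ofReal (2 / k) * volume 𝕀 :=
        volume_inter_le_of_forall_cylinder (n := n) subset_rfl (fun _ _ => inter_subset_left)
          fun l hl hln => by subst hln; exact volume_cylinder_inter_le_partQuot_le hl hk
    _ ≤ ENNReal.ofReal (2 / k) := mul_le_of_le_one_right' volume_unitIrrationals_le_one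

lemma volume_forall_partQuot_lt_le {N : ℕ} (hN : 0 < N) {M : ℕ} (hNM : N ≤ M) :
    volume (𝕀 ∩ {x | ∀ n ∈ Icc N M, partQuot x n < n}) ≤ ENNReal.ofReal (N / M) := by
  induction M, hNM using Nat.le_induction with
  | base =>
    rw [div_self (by exact_mod_cast hN.ne'), ENNReal.ofReal_one]
    exact (measure_mono inter_subset_left).trans volume_unitIrrationals_le_one
  | succ M hNM ih =>
    set V := 𝕀 ∩ {x | ∀ n ∈ Icc N M, partQuot x n < n}
    have hsucc : 𝕀 ∩ {x | ∀ n ∈ Icc N (M + 1), partQuot x n < n} =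
        V ∩ {x | partQuot x (M + 1) < M + 1} := by
      ext x
      simp only [V, mem_inter_iff, mem_ofPred_eq, mem_Icc, and_assoc]
      refine and_congr_right fun _ => ⟨fun h => ⟨fun n hn => h n ⟨hn.1, hn.2.trans M.le_succ⟩,
        h _ ⟨hNM.trans M.le_succ, le_rfl⟩⟩, fun ⟨h, h'⟩ n hn => ?_⟩
      rcases Nat.of_le_succ hn.2 with hnM | rfl
      exacts [h n ⟨hn.1, hnM⟩, h']
    have hV : ∀ x ∈ V, cylinder (partQuots x M) ⊆ V := by
      rintro x ⟨-, hx⟩ y ⟨hy, hyx⟩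
      rw [length_partQuots] at hyx
      exact ⟨hy, fun n hn => partQuot_eq_of_partQuots_eq hyx (hN.trans_le hn.1) hn.2 ▸ hx n hn⟩
    have hM : (0 : ℝ) < M := by exact_mod_cast hN.trans_le hNM
    calc volume (𝕀 ∩ {x | ∀ n ∈ Icc N (M + 1), partQuot x n < n})
        = volume (V ∩ {x | partQuot x (M + 1) < M + 1}) := by rw [hsucc]
      _ ≤ ENNReal.ofReal (1 - 1 / (M + 1 : ℕ)) * volume V :=
          volume_inter_le_of_forall_cylinder inter_subset_left hV fun l hl hlM => by
            subst hlM
            exact volume_cylinder_inter_partQuot_lt_le hl (Nat.succ_pos _)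
      _ ≤ ENNReal.ofReal (1 - 1 / (M + 1 : ℕ)) * ENNReal.ofReal (N / M) := by gcongr
      _ = ENNReal.ofReal (N / (M + 1 : ℕ)) := by
          rw [← ENNReal.ofReal_mul (sub_nonneg.2 (div_le_one_of_le₀ (by simp) (by positivity)))]
          congr 1
          push_cast
          field_simp
          ring

lemma volume_forall_ge_partQuot_lt {N : ℕ} (hN : 0 < N) :
    volume (𝕀 ∩ {x | ∀ n ≥ N, partQuot x n < n}) = 0 := by
  have hlim : Tendsto (fun M : ℕ => ENNReal.ofReal (N / M)) atTop (𝓝 0) := by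
    simpa using ENNReal.tendsto_ofReal (tendsto_const_div_atTop_nhds_zero_nat (N : ℝ))
  refine le_antisymm (ge_of_tendsto hlim (eventually_atTop.2 ⟨N, fun M hM => ?_⟩)) zero_le
  have hsub : {x | ∀ n ≥ N, partQuot x n < n} ⊆ {x | ∀ n ∈ Icc N M, partQuot x n < n} :=
    fun x hx n hn => hx n hn.1
  exact (measure_mono (inter_subset_inter_right _ hsub)).trans (volume_forall_partQuot_lt_le hN hM)

lemma ae_frequently_le_partQuot :
    ∀ᵐ x ∂volume.restrict (Ioo (0 : ℝ) 1), ∃ᶠ n in atTop, n ≤ partQuot x n := by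
  have h : ∀ᵐ x, ∀ N : ℕ, x ∉ 𝕀 ∩ {x | ∀ n ≥ N + 1, partQuot x n < n} :=
    ae_all_iff.2 fun N => measure_eq_zero_iff_ae_notMem.1 (volume_forall_ge_partQuot_lt N.succ_pos)
  filter_upwards [ae_restrict_Ioo_mem_unitIrrationals, ae_restrict_of_ae h] with x hx hN
  refine frequently_atTop.2 fun N => ?_
  obtain ⟨n, hn, hle⟩ : ∃ n ≥ N + 1, n ≤ partQuot x n := by simpa [hx] using hN N
  exact ⟨n, by omega, hle⟩

lemma ae_eventually_partQuot_le_rpow {p : ℝ} (hp : 1 < p) :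
    ∀ᵐ x ∂volume.restrict (Ioo (0 : ℝ) 1), ∀ᶠ n in atTop, (partQuot x n : ℝ) ≤ n ^ p := by
  set E : ℕ → Set ℝ := fun n => 𝕀 ∩ {x | (n : ℝ) ^ p < partQuot x n}
  have hE (n : ℕ) : volume (E n) ≤ ENNReal.ofReal (2 / (⌊(n : ℝ) ^ p⌋₊ + 1)) := by
    rcases n with _ | m
    · calc volume (E 0) ≤ 1 := (measure_mono inter_subset_left).trans volume_unitIrrationals_le_one
        _ ≤ _ := by
          rw [Nat.cast_zero, Real.zero_rpow (by linarith), Nat.floor_zero]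
          norm_num
    · refine (measure_mono (inter_subset_inter_right _ fun x hx => ?_)).trans
        ((volume_le_partQuot_le m (Nat.succ_pos ⌊((m + 1 : ℕ) : ℝ) ^ p⌋₊)).trans_eq
          (by rw [Nat.cast_succ]))
      exact (Nat.floor_lt (by positivity)).2 hx
  have hsum : Summable fun n : ℕ => 2 / ((⌊(n : ℝ) ^ p⌋₊ : ℝ) + 1) := by
    refine ((Real.summable_nat_rpow_inv.2 hp).mul_left 2).of_norm_bounded_eventually_nat ?_
    filter_upwards [eventually_ge_atTop 1] with n hn
    rw [Real.norm_of_nonneg (by positivity), div_eq_mul_inv]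
    gcongr
    exact (Nat.lt_floor_add_one _).le
  have hfin : ∑' n, volume (E n) ≠ ∞ := by
    refine ne_top_of_le_ne_top ?_ (ENNReal.tsum_le_tsum hE)
    rw [← ENNReal.ofReal_tsum_of_nonneg (fun n => by positivity) hsum]
    exact ENNReal.ofReal_ne_top
  filter_upwards [ae_restrict_Ioo_mem_unitIrrationals,
    ae_restrict_of_ae (ae_eventually_notMem hfin)] with x hx hev
  filter_upwards [hev] with n hn
  exact not_lt.1 fun h => hn ⟨hx, h⟩

lemma ae_forall_eventually_partQuot_le_rpow :
    ∀ᵐ x ∂volume.restrict (Ioo (0 : ℝ) 1),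
      ∀ p : ℝ, 1 < p → ∀ᶠ n in atTop, (partQuot x n : ℝ) ≤ n ^ p := by
  have h := ae_all_iff.2 fun m : ℕ =>
    ae_eventually_partQuot_le_rpow (p := 1 + 1 / (m + 1)) (lt_add_of_pos_right 1 (by positivity))
  filter_upwards [h] with x hx p hp
  obtain ⟨m, hm⟩ := exists_nat_one_div_lt (sub_pos.2 hp)
  filter_upwards [hx m, eventually_ge_atTop 1] with n hn hn1
  exact hn.trans (Real.rpow_le_rpow_of_exponent_le (by exact_mod_cast hn1) (by linarith))

lemma limsup_log_div_log_eq_one {a : ℕ → ℕ} (hfreq : ∃ᶠ n in atTop, n ≤ a n)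
    (hev : ∀ p : ℝ, 1 < p → ∀ᶠ n in atTop, (a n : ℝ) ≤ n ^ p) :
    limsup (fun n => Real.log (a n) / Real.log n) atTop = 1 := by
  set u := fun n => Real.log (a n) / Real.log n
  have hup : ∀ p : ℝ, 1 < p → ∀ᶠ n in atTop, u n ≤ p := by
    intro p hp
    filter_upwards [hev p hp, eventually_ge_atTop 2] with n hn hn2
    have hlog : 0 < Real.log n := Real.log_pos (by exact_mod_cast hn2)
    rw [div_le_iff₀ hlog, ← Real.log_rpow (by positivity)]
    rcases (a n).eq_zero_or_pos with h0 | hpos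
    · rw [h0, Nat.cast_zero, Real.log_zero]
      have hn1 : (1 : ℝ) ≤ n := by exact_mod_cast hn2.trans' one_le_two
      exact Real.log_nonneg (Real.one_le_rpow hn1 (by linarith))
    · exact Real.log_le_log (by exact_mod_cast hpos) hn
  have hlow : ∃ᶠ n in atTop, 1 ≤ u n := by
    refine (hfreq.and_eventually (eventually_ge_atTop 2)).mono fun n ⟨hn, hn2⟩ => ?_
    have hlog : 0 < Real.log n := Real.log_pos (by exact_mod_cast hn2)
    rw [le_div_iff₀ hlog, one_mul]
    exact Real.log_le_log (by positivity) (by exact_mod_cast hn)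
  refine le_antisymm (le_of_forall_gt_imp_ge_of_dense fun p hp => ?_)
    (le_limsup_of_frequently_le hlow ⟨2, eventually_map.2 (hup 2 one_lt_two)⟩)
  exact limsup_le_of_le (IsCoboundedUnder.of_frequently_ge hlow) (hup p hp)

/-- For almost every `x = [a₁, a₂, …] ∈ (0,1)`, `limsup_{n→∞} (log aₙ)/(log n) = 1`. -/
theorem limsup_log_partial_quotients :
    ∀ᵐ x ∂(volume.restrict (Set.Ioo (0 : ℝ) 1)),
      Filter.limsup (fun n : ℕ => Real.log (partQuot x n) / Real.log n) atTop = 1 := by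
  filter_upwards [ae_frequently_le_partQuot, ae_forall_eventually_partQuot_le_rpow] with x hfreq hev
  exact limsup_log_div_log_eq_one hfreq hev
end

section
/- For every k with 0 < k ≤ 2, the integral of (x − y)^{−2} over the region Δ_k equals 𝒜(k); explicitly, ∬_{Δ_k} (x − y)^{−2} dy dx = k when 0 < k ≤ 1, and ∬_{Δ_k} (x − y)^{−2} dy dx = 2 − k + 2·log k when 1 ≤ k ≤ 2 (the key computation in Proposition: the measure of the thickened section for approximating excursions). -/
open MeasureTheory Set

/-- The region `I = ((−1,0) × (1,∞)) ∪ ((0,1) × (−∞,−1)) ⊂ ℝ²`. -/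
def regionI : Set (ℝ × ℝ) :=
  (Set.Ioo (-1 : ℝ) 0 ×ˢ Set.Ioi (1 : ℝ)) ∪ (Set.Ioo (0 : ℝ) 1 ×ˢ Set.Iio (-1 : ℝ))

/-- The region `Δ_k = {(x,y) ∈ I : |x − y| > 2/k}`. -/
def deltaRegion (k : ℝ) : Set (ℝ × ℝ) := {p ∈ regionI | 2 / k < |p.1 - p.2|}

lemma inner_Ioi (x a : ℝ) (hxa : x < a) :
    IntegrableOn (fun y => ((x - y) ^ 2)⁻¹) (Ioi a) ∧
      ∫ y in Ioi a, ((x - y) ^ 2)⁻¹ = (a - x)⁻¹ := by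
  have hderiv : ∀ y ∈ Ici a, HasDerivAt (fun y : ℝ => -(y - x)⁻¹) (((x - y) ^ 2)⁻¹) y := by
    intro y hy
    have hy0 : y - x ≠ 0 := sub_ne_zero.2 (hxa.trans_le hy).ne'
    have h1 : HasDerivAt (fun y : ℝ => y - x) 1 y := (hasDerivAt_id y).sub_const x
    have h2 := (h1.inv hy0).neg
    refine h2.congr_deriv ?_
    rw [show (x - y) ^ 2 = (y - x) ^ 2 by ring, neg_div, neg_neg, one_div]
  have hpos : ∀ y ∈ Ioi a, 0 ≤ ((x - y) ^ 2)⁻¹ := fun y _ => by positivity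
  have htend : Filter.Tendsto (fun y : ℝ => -(y - x)⁻¹) Filter.atTop (nhds 0) := by
    have h1 : Filter.Tendsto (fun y : ℝ => y - x) Filter.atTop Filter.atTop :=
      Filter.tendsto_atTop_add_const_right _ (-x) Filter.tendsto_id
    simpa using h1.inv_tendsto_atTop.neg
  refine ⟨integrableOn_Ioi_deriv_of_nonneg' hderiv hpos htend, ?_⟩
  rw [integral_Ioi_of_hasDerivAt_of_nonneg' hderiv hpos htend]
  simp

lemma inner_Iio (x b : ℝ) (hbx : b < x) :
    IntegrableOn (fun y => ((x - y) ^ 2)⁻¹) (Iio b) ∧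
      ∫ y in Iio b, ((x - y) ^ 2)⁻¹ = (x - b)⁻¹ := by
  have key := inner_Ioi (-x) (-b) (by linarith)
  have hfe : (fun y : ℝ => ((-x - y) ^ 2)⁻¹) = fun y : ℝ => ((x - (-y)) ^ 2)⁻¹ := by
    funext y; rw [show (-x - y) ^ 2 = (x - (-y)) ^ 2 by ring]
  have A : MeasurableEmbedding (fun y : ℝ => -y) :=
    (Homeomorph.neg ℝ).isClosedEmbedding.measurableEmbedding
  have hpre : (fun y : ℝ => -y) ⁻¹' (Iio b) = Ioi (-b) := by
    ext y; simp only [mem_preimage, mem_Iio, mem_Ioi]; constructor <;> intro h <;> linarith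
  constructor
  · have hmap : (volume : Measure ℝ).restrict (Iio b)
        = Measure.map (fun y : ℝ => -y) (volume.restrict (Ioi (-b))) := by
      conv_lhs => rw [← Measure.map_neg_eq_self (volume : Measure ℝ)]
      rw [A.restrict_map, hpre]
    rw [IntegrableOn, hmap, A.integrable_map_iff]
    have := key.1
    rw [hfe] at this
    exact this
  · rw [← integral_Iic_eq_integral_Iio]
    have h3 := integral_comp_neg_Iic b (fun y : ℝ => ((x - (-y)) ^ 2)⁻¹)
    simp only [neg_neg] at h3
    rw [h3, ← hfe, key.2, show -b - -x = x - b by ring]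

lemma deltaRegion_split (k : ℝ) (hk0 : 0 < k) (hk2 : k ≤ 2) :
    ∫ p in deltaRegion k, ((p.1 - p.2) ^ 2)⁻¹ =
      (∫ x in Ioo (-1 : ℝ) 0, (max (1 - x) (2 / k))⁻¹)
        + ∫ x in Ioo (0 : ℝ) 1, (max (x + 1) (2 / k))⁻¹ := by
  have hc0 : (0 : ℝ) < 2 / k := by positivity
  have hc1 : (1 : ℝ) ≤ 2 / k := by rw [le_div_iff₀ hk0]; linarith
  have hopen : IsOpen (deltaRegion k) := by
    have h1 : IsOpen regionI :=
      (isOpen_Ioo.prod isOpen_Ioi).union (isOpen_Ioo.prod isOpen_Iio)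
    have h2 : IsOpen {p : ℝ × ℝ | 2 / k < |p.1 - p.2|} :=
      isOpen_lt continuous_const ((continuous_fst.sub continuous_snd).abs)
    exact h1.inter h2
  have hmeasΔ : MeasurableSet (deltaRegion k) := hopen.measurableSet
  set F : ℝ × ℝ → ℝ := (deltaRegion k).indicator (fun p => ((p.1 - p.2) ^ 2)⁻¹) with hF_def
  -- membership characterizations
  have hmemA : ∀ x ∈ Ioo (-1 : ℝ) 0, ∀ y : ℝ,
      ((x, y) ∈ deltaRegion k ↔ y ∈ Ioi (max 1 (x + 2 / k))) := by
    intro x hx y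
    obtain ⟨hx1, hx2⟩ := hx
    simp only [deltaRegion, regionI, mem_sep_iff, mem_union, mem_prod, mem_Ioo, mem_Ioi,
      mem_Iio, max_lt_iff]
    constructor
    · rintro ⟨h1 | h2, habs⟩
      · rw [abs_of_neg (by linarith [h1.2] : x - y < 0)] at habs
        exact ⟨h1.2, by linarith⟩
      · exact absurd h2.1.1 (by linarith)
    · rintro ⟨hy1, hy2⟩
      refine ⟨Or.inl ⟨⟨hx1, hx2⟩, hy1⟩, ?_⟩
      rw [abs_of_neg (by linarith : x - y < 0)]
      linarith
  have hmemB : ∀ x ∈ Ioo (0 : ℝ) 1, ∀ y : ℝ,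
      ((x, y) ∈ deltaRegion k ↔ y ∈ Iio (min (-1) (x - 2 / k))) := by
    intro x hx y
    obtain ⟨hx1, hx2⟩ := hx
    simp only [deltaRegion, regionI, mem_sep_iff, mem_union, mem_prod, mem_Ioo, mem_Ioi,
      mem_Iio, lt_min_iff]
    constructor
    · rintro ⟨h1 | h2, habs⟩
      · exact absurd h1.1.2 (by linarith)
      · rw [abs_of_pos (by linarith [h2.2] : 0 < x - y)] at habs
        exact ⟨h2.2, by linarith⟩
    · rintro ⟨hy1, hy2⟩
      refine ⟨Or.inr ⟨⟨hx1, hx2⟩, hy1⟩, ?_⟩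
      rw [abs_of_pos (by linarith : 0 < x - y)]
      linarith
  have hmemC : ∀ x : ℝ, x ∉ Ioo (-1 : ℝ) 0 → x ∉ Ioo (0 : ℝ) 1 → ∀ y : ℝ,
      (x, y) ∉ deltaRegion k := by
    intro x hA hB y h
    obtain ⟨h1 | h2, -⟩ := h
    · exact hA h1.1
    · exact hB h2.1
  -- section functions
  have hsecA : ∀ x ∈ Ioo (-1 : ℝ) 0, (fun y => F (x, y))
      = (Ioi (max 1 (x + 2 / k))).indicator (fun y => ((x - y) ^ 2)⁻¹) := by
    intro x hx
    funext y
    by_cases h : y ∈ Ioi (max 1 (x + 2 / k))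
    · rw [hF_def, indicator_of_mem ((hmemA x hx y).2 h), indicator_of_mem h]
    · rw [hF_def, indicator_of_notMem (fun hm => h ((hmemA x hx y).1 hm)),
        indicator_of_notMem h]
  have hsecB : ∀ x ∈ Ioo (0 : ℝ) 1, (fun y => F (x, y))
      = (Iio (min (-1) (x - 2 / k))).indicator (fun y => ((x - y) ^ 2)⁻¹) := by
    intro x hx
    funext y
    by_cases h : y ∈ Iio (min (-1) (x - 2 / k))
    · rw [hF_def, indicator_of_mem ((hmemB x hx y).2 h), indicator_of_mem h]
    · rw [hF_def, indicator_of_notMem (fun hm => h ((hmemB x hx y).1 hm)),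
        indicator_of_notMem h]
  have hsecC : ∀ x : ℝ, x ∉ Ioo (-1 : ℝ) 0 → x ∉ Ioo (0 : ℝ) 1 →
      (fun y => F (x, y)) = fun _ => (0 : ℝ) := by
    intro x hA hB
    funext y
    exact indicator_of_notMem (hmemC x hA hB y) _
  have hxltA : ∀ x ∈ Ioo (-1 : ℝ) 0, x < max 1 (x + 2 / k) := fun x hx =>
    lt_of_lt_of_le (by linarith [hx.2]) (le_max_left _ _)
  have hxgtB : ∀ x ∈ Ioo (0 : ℝ) 1, min (-1 : ℝ) (x - 2 / k) < x := fun x hx =>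
    lt_of_le_of_lt (min_le_left _ _) (by linarith [hx.1])
  -- inner integral values
  have hIA : ∀ x ∈ Ioo (-1 : ℝ) 0, ∫ y, F (x, y) = (max (1 - x) (2 / k))⁻¹ := by
    intro x hx
    rw [hsecA x hx, integral_indicator measurableSet_Ioi, (inner_Ioi x _ (hxltA x hx)).2,
      show max 1 (x + 2 / k) - x = max (1 - x) (2 / k) by
        rw [← max_sub_sub_right, add_sub_cancel_left]]
  have hIB : ∀ x ∈ Ioo (0 : ℝ) 1, ∫ y, F (x, y) = (max (x + 1) (2 / k))⁻¹ := by
    intro x hx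
    rw [hsecB x hx, integral_indicator measurableSet_Iio, (inner_Iio x _ (hxgtB x hx)).2,
      show x - min (-1) (x - 2 / k) = max (x + 1) (2 / k) by
        rcases le_total (-1 : ℝ) (x - 2 / k) with h | h
        · rw [min_eq_left h, max_eq_left (by linarith)]; ring
        · rw [min_eq_right h, max_eq_right (by linarith)]; ring]
  have hIC : ∀ x : ℝ, x ∉ Ioo (-1 : ℝ) 0 → x ∉ Ioo (0 : ℝ) 1 → ∫ y, F (x, y) = 0 := by
    intro x hA hB
    rw [hsecC x hA hB]
    exact integral_zero _ _
  -- measurability and integrability of F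
  have hFmeas : Measurable F :=
    (((measurable_fst.sub measurable_snd).pow_const 2).inv).indicator hmeasΔ
  have hFnn : ∀ p : ℝ × ℝ, 0 ≤ F p :=
    indicator_nonneg (fun q _ => by positivity)
  have aesm : AEStronglyMeasurable F ((volume : Measure ℝ).prod volume) := by
    rw [← Measure.volume_eq_prod]
    exact hFmeas.aestronglyMeasurable
  have hnormint : ∀ x : ℝ, (∫ y, ‖F (x, y)‖) = ∫ y, F (x, y) := by
    intro x
    congr 1
    funext y
    exact Real.norm_of_nonneg (hFnn _)
  have hFint : Integrable F ((volume : Measure ℝ).prod volume) := by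
    rw [integrable_prod_iff aesm]
    constructor
    · refine Filter.Eventually.of_forall (fun x => ?_)
      by_cases hA : x ∈ Ioo (-1 : ℝ) 0
      · rw [hsecA x hA]
        exact (inner_Ioi x _ (hxltA x hA)).1.integrable_indicator measurableSet_Ioi
      by_cases hB : x ∈ Ioo (0 : ℝ) 1
      · rw [hsecB x hB]
        exact (inner_Iio x _ (hxgtB x hB)).1.integrable_indicator measurableSet_Iio
      · rw [hsecC x hA hB]
        exact integrable_zero _ _ _
    · have hbint : Integrable ((Ioo (-1 : ℝ) 1).indicator fun _ => (1 : ℝ)) volume := by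
        refine (integrableOn_const ?_).integrable_indicator measurableSet_Ioo
        rw [Real.volume_Ioo]
        exact ENNReal.ofReal_ne_top
      refine Integrable.mono' hbint (aesm.norm.integral_prod_right') ?_
      refine Filter.Eventually.of_forall (fun x => ?_)
      rw [hnormint x]
      by_cases hA : x ∈ Ioo (-1 : ℝ) 0
      · rw [hIA x hA, indicator_of_mem (by constructor <;> linarith [hA.1, hA.2] : x ∈ Ioo (-1:ℝ) 1)]
        rw [Real.norm_of_nonneg (by positivity)]
        exact inv_le_one_of_one_le₀ (le_trans hc1 (le_max_right _ _))
      by_cases hB : x ∈ Ioo (0 : ℝ) 1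
      · rw [hIB x hB, indicator_of_mem (by constructor <;> linarith [hB.1, hB.2] : x ∈ Ioo (-1:ℝ) 1)]
        rw [Real.norm_of_nonneg (by positivity)]
        exact inv_le_one_of_one_le₀ (le_trans hc1 (le_max_right _ _))
      · rw [hIC x hA hB, norm_zero]
        exact indicator_nonneg (fun _ _ => zero_le_one) x
  -- Fubini
  have step1 : ∫ p in deltaRegion k, ((p.1 - p.2) ^ 2)⁻¹ = ∫ x : ℝ, ∫ y : ℝ, F (x, y) := by
    rw [← integral_indicator hmeasΔ, ← hF_def, Measure.volume_eq_prod, integral_prod F hFint]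
  rw [step1]
  have hG : (fun x : ℝ => ∫ y, F (x, y))
      = fun x => (Ioo (-1 : ℝ) 0).indicator (fun x => (max (1 - x) (2 / k))⁻¹) x
          + (Ioo (0 : ℝ) 1).indicator (fun x => (max (x + 1) (2 / k))⁻¹) x := by
    funext x
    by_cases hA : x ∈ Ioo (-1 : ℝ) 0
    · have hB : x ∉ Ioo (0 : ℝ) 1 := fun hB => absurd hA.2 (by linarith [hB.1])
      rw [hIA x hA, indicator_of_mem hA, indicator_of_notMem hB, add_zero]
    by_cases hB : x ∈ Ioo (0 : ℝ) 1
    · rw [hIB x hB, indicator_of_notMem hA, indicator_of_mem hB, zero_add]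
    · rw [hIC x hA hB, indicator_of_notMem hA, indicator_of_notMem hB, add_zero]
  rw [hG]
  have hcont1 : Continuous fun x : ℝ => (max (1 - x) (2 / k))⁻¹ :=
    ((continuous_const.sub continuous_id).max continuous_const).inv₀
      (fun x => ne_of_gt (lt_of_lt_of_le hc0 (le_max_right _ _)))
  have hcont2 : Continuous fun x : ℝ => (max (x + 1) (2 / k))⁻¹ :=
    ((continuous_id.add continuous_const).max continuous_const).inv₀
      (fun x => ne_of_gt (lt_of_lt_of_le hc0 (le_max_right _ _)))
  have hint1 : Integrable ((Ioo (-1 : ℝ) 0).indicator fun x => (max (1 - x) (2 / k))⁻¹) volume :=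
    (((hcont1.continuousOn).integrableOn_Icc).mono_set Ioo_subset_Icc_self).integrable_indicator
      measurableSet_Ioo
  have hint2 : Integrable ((Ioo (0 : ℝ) 1).indicator fun x => (max (x + 1) (2 / k))⁻¹) volume :=
    (((hcont2.continuousOn).integrableOn_Icc).mono_set Ioo_subset_Icc_self).integrable_indicator
      measurableSet_Ioo
  rw [integral_add hint1 hint2, integral_indicator measurableSet_Ioo,
    integral_indicator measurableSet_Ioo]

lemma symm_eval (C : ℝ) :
    ∫ x in Ioo (0 : ℝ) 1, (max (x + 1) C)⁻¹ = ∫ x in Ioo (-1 : ℝ) 0, (max (1 - x) C)⁻¹ := by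
  rw [← integral_Ioc_eq_integral_Ioo, ← integral_Ioc_eq_integral_Ioo,
    ← intervalIntegral.integral_of_le (by norm_num : (0 : ℝ) ≤ 1),
    ← intervalIntegral.integral_of_le (by norm_num : (-1 : ℝ) ≤ 0)]
  have h := intervalIntegral.integral_comp_neg (a := -1) (b := 0)
    (fun x : ℝ => (max (x + 1) C)⁻¹)
  simp only [neg_zero, neg_neg] at h
  rw [← h]
  refine intervalIntegral.integral_congr (fun x _ => ?_)
  rw [show -x + 1 = 1 - x by ring]

lemma eval_le_one (k : ℝ) (hk0 : 0 < k) (hk1 : k ≤ 1) :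
    ∫ x in Ioo (-1 : ℝ) 0, (max (1 - x) (2 / k))⁻¹ = k / 2 := by
  have h2 : (2 : ℝ) ≤ 2 / k := by rw [le_div_iff₀ hk0]; nlinarith
  rw [setIntegral_congr_fun (g := fun _ => (2 / k)⁻¹) measurableSet_Ioo
    (fun x hx => by dsimp only; rw [max_eq_right (by linarith [hx.1] : 1 - x ≤ 2 / k)])]
  rw [setIntegral_const, measureReal_def, Real.volume_Ioo]
  rw [show (0 : ℝ) - (-1) = 1 by norm_num, ENNReal.toReal_ofReal zero_le_one, one_smul, inv_div]

lemma eval_ge_one (k : ℝ) (hk1 : 1 ≤ k) (hk2 : k ≤ 2) :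
    ∫ x in Ioo (-1 : ℝ) 0, (max (1 - x) (2 / k))⁻¹ = Real.log k + (1 - k / 2) := by
  have hk0 : (0 : ℝ) < k := by linarith
  have hc0 : (0 : ℝ) < 2 / k := by positivity
  have hc1 : (1 : ℝ) ≤ 2 / k := by rw [le_div_iff₀ hk0]; linarith
  have hc2 : 2 / k ≤ 2 := by rw [div_le_iff₀ hk0]; nlinarith
  have hb1 : (-1 : ℝ) ≤ 1 - 2 / k := by linarith
  have hb2 : 1 - 2 / k ≤ 0 := by linarith
  have hcont : Continuous fun x : ℝ => (max (1 - x) (2 / k))⁻¹ :=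
    ((continuous_const.sub continuous_id).max continuous_const).inv₀
      (fun x => ne_of_gt (lt_of_lt_of_le hc0 (le_max_right _ _)))
  rw [← integral_Ioc_eq_integral_Ioo,
    ← intervalIntegral.integral_of_le (by norm_num : (-1 : ℝ) ≤ 0),
    ← intervalIntegral.integral_add_adjacent_intervals (b := 1 - 2 / k)
      (hcont.intervalIntegrable _ _) (hcont.intervalIntegrable _ _)]
  have h1 : ∫ x in (-1 : ℝ)..(1 - 2 / k), (max (1 - x) (2 / k))⁻¹ = Real.log k := by
    rw [intervalIntegral.integral_congr (g := fun x => (1 - x)⁻¹) (fun x hx => by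
      rw [uIcc_of_le hb1] at hx
      dsimp only
      rw [max_eq_left (by linarith [hx.2] : 2 / k ≤ 1 - x)])]
    rw [intervalIntegral.integral_eq_sub_of_hasDerivAt
      (f := fun x : ℝ => -Real.log (1 - x)) (f' := fun x : ℝ => (1 - x)⁻¹)
      (fun x hx => by
        rw [uIcc_of_le hb1] at hx
        have h10 : (0 : ℝ) < 1 - x := by linarith [hx.2]
        have hinner : HasDerivAt (fun x : ℝ => 1 - x) (-1) x := by
          simpa using (hasDerivAt_id x).const_sub 1
        have hd := ((Real.hasDerivAt_log (ne_of_gt h10)).comp x hinner).neg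
        refine hd.congr_deriv ?_
        ring)
      (by
        refine ContinuousOn.intervalIntegrable ?_
        refine ((continuous_const.sub continuous_id).continuousOn).inv₀ (fun x hx => ?_)
        rw [uIcc_of_le hb1] at hx
        have : (0 : ℝ) < 1 - x := by linarith [hx.2]
        exact ne_of_gt this)]
    rw [show (1 : ℝ) - (1 - 2 / k) = 2 / k by ring, show (1 : ℝ) - (-1) = 2 by norm_num,
      Real.log_div two_ne_zero (ne_of_gt hk0)]
    ring
  have h2 : ∫ x in (1 - 2 / k : ℝ)..0, (max (1 - x) (2 / k))⁻¹ = 1 - k / 2 := by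
    rw [intervalIntegral.integral_congr (g := fun _ => (2 / k)⁻¹) (fun x hx => by
      rw [uIcc_of_le hb2] at hx
      dsimp only
      rw [max_eq_right (by linarith [hx.1] : 1 - x ≤ 2 / k)])]
    rw [intervalIntegral.integral_const, smul_eq_mul, inv_div]
    field_simp
    ring
  rw [h1, h2]


/-- For `0 < k ≤ 2`, `∬_{Δ_k} (x − y)^{−2} dy dx = 𝒜(k)`: it equals `k` when `0 < k ≤ 1`
and `2 − k + 2 log k` when `1 ≤ k ≤ 2`. -/
theorem integral_deltaRegion (k : ℝ) (hk0 : 0 < k) (hk2 : k ≤ 2) :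
    (k ≤ 1 → ∫ p in deltaRegion k, ((p.1 - p.2) ^ 2)⁻¹ = k) ∧
    (1 ≤ k → ∫ p in deltaRegion k, ((p.1 - p.2) ^ 2)⁻¹ = 2 - k + 2 * Real.log k) := by
  constructor
  · intro hk1
    rw [deltaRegion_split k hk0 hk2, symm_eval, eval_le_one k hk0 hk1]
    ring
  · intro hk1
    rw [deltaRegion_split k hk0 hk2, symm_eval, eval_ge_one k hk1 hk2]
    ring
end
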